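/- arXiv:1403.5153 — 5 statements merged into one kernel-verified Lean document; each statement's English description precedes it below -/
import Mathlib

section
/- Let p be an odd prime and D = ⟨x, y | x^(p^m) = y^(p^n) = 1, y x y⁻¹ = x^(1+p^(m-1))⟩ with m ≥ 2, n ≥ 1. Then the number of conjugacy classes of D equals p^(n+m-1) + p^(n+m-2) - p^(n+m-3). -/
/-!
Here `c = ⁅y, x⁆ = x ^ p ^ (m - 1)` is central of order `p`. When the commutator of the two
generators is central, every commutator is a power of it, so `h ↦ ⁅h, g⁆` is a homomorphism into
`⟨c⟩`; for noncentral `g` its image is all of `⟨c⟩`, hence the class of `g` is the coset `⟨c⟩ g`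
of size `p`. Likewise `g ↦ (⁅g, x⁆, ⁅g, y⁆)` maps `D` onto `⟨c⟩ × ⟨c⟩` with kernel `Z(D)`, so
`|Z(D)| = p ^ (m + n - 2)`, and the class equation gives the count.
-/

open Subgroup
open scoped commutatorElement

section

variable {G : Type*} [Group G]

theorem Subgroup.normal_of_le_center {N : Subgroup G} (hN : N ≤ center G) : N.Normal where
  conj_mem n hn g := by rwa [mem_center_iff.mp (hN hn) g, mul_inv_cancel_right]

theorem mem_center_iff_of_closure_pair_eq_top {x y g : G} (hgen : closure {x, y} = ⊤) :
    g ∈ center G ↔ Commute x g ∧ Commute y g := by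
  rw [← centralizer_univ, ← coe_top, ← hgen, centralizer_closure, mem_centralizer_iff]
  simp [Commute, SemiconjBy]

theorem commutatorElement_mem_of_closure_pair_eq_top {N : Subgroup G} [N.Normal] {x y : G}
    (hgen : closure {x, y} = ⊤) (hxy : ⁅x, y⁆ ∈ N) (g h : G) : ⁅g, h⁆ ∈ N := by
  have hyx : ⁅y, x⁆ ∈ N := commutatorElement_inv x y ▸ inv_mem hxy
  refine closure_induction₂ (k := {x, y}) (p := fun g h _ _ ↦ ⁅g, h⁆ ∈ N) ?_ ?_ ?_ ?_ ?_ ?_ ?_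
    (hgen ▸ mem_top g) (hgen ▸ mem_top h)
  · rintro a b (rfl | rfl) (rfl | rfl) <;> simp [hxy, hyx]
  · simp
  · simp
  · intro a b c _ _ _ hac hbc
    rw [commutatorElement_mul_left_eq_conj_mul]
    exact mul_mem (Normal.conj_mem inferInstance _ hbc a) hac
  · intro b c a _ _ _ hab hac
    rw [commutatorElement_mul_right_eq_mul_conj, mul_assoc, mul_assoc, ← mul_assoc b]
    exact mul_mem hab (Normal.conj_mem inferInstance _ hac b)
  · intro a b _ _ hab
    rw [commutatorElement_inv_left]
    simpa using Normal.conj_mem inferInstance _ (inv_mem hab) a⁻¹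
  · intro a b _ _ hab
    rw [commutatorElement_inv_right]
    simpa using Normal.conj_mem inferInstance _ (inv_mem hab) b⁻¹

def commutatorRightHom {N : Subgroup G} (hN : N ≤ center G) (g : G) (hg : ∀ h : G, ⁅h, g⁆ ∈ N) :
    G →* N where
  toFun h := ⟨⁅h, g⁆, hg h⟩
  map_one' := by simp
  map_mul' a b := by
    ext
    simp only [MulMemClass.mk_mul_mk]
    rw [commutatorElement_mul_left_eq_conj_mul, mem_center_iff.mp (hN (hg b)) a,
      mul_inv_cancel_right, mem_center_iff.mp (hN (hg b))]

theorem card_carrier_conjClasses_mk_eq_card_range {N : Subgroup G} (hN : N ≤ center G) (g : G)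
    (hg : ∀ h : G, ⁅h, g⁆ ∈ N) :
    Nat.card (ConjClasses.mk g).carrier = Nat.card (commutatorRightHom hN g hg).range := by
  have hcarrier : (ConjClasses.mk g).carrier =
      (fun n : N ↦ (n : G) * g) '' Set.range (commutatorRightHom hN g hg) := by
    ext k
    rw [ConjClasses.mem_carrier_iff_mk_eq, ConjClasses.mk_eq_mk_iff_isConj, isConj_comm, isConj_iff]
    simp [commutatorRightHom, commutatorElement_def]
  rw [hcarrier, Nat.card_image_of_injective (fun a b h ↦ Subtype.ext (mul_right_cancel h))]
  rfl

section TwoGenerated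

variable {x y : G} (hgen : closure {x, y} = ⊤) (hc : ⁅x, y⁆ ∈ center G)
include hgen hc

theorem commutatorElement_mem_zpowers (g h : G) : ⁅g, h⁆ ∈ zpowers ⁅x, y⁆ :=
  have := normal_of_le_center (zpowers_le.mpr hc)
  commutatorElement_mem_of_closure_pair_eq_top hgen (mem_zpowers _) g h

theorem card_carrier_conjClasses_mk_of_notMem_center (hp : (orderOf ⁅x, y⁆).Prime) {g : G}
    (hg : g ∉ center G) : Nat.card (ConjClasses.mk g).carrier = orderOf ⁅x, y⁆ := by
  set φ := commutatorRightHom (zpowers_le.mpr hc) g (commutatorElement_mem_zpowers hgen hc · g)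
  rw [card_carrier_conjClasses_mk_eq_card_range]
  have hdvd : Nat.card φ.range ∣ orderOf ⁅x, y⁆ :=
    Nat.card_zpowers ⁅x, y⁆ ▸ card_subgroup_dvd_card _
  refine (hp.eq_one_or_self_of_dvd _ hdvd).resolve_left
    fun h1 ↦ hg (mem_center_iff.mpr fun h ↦ ?_)
  rw [card_eq_one, MonoidHom.range_eq_bot_iff] at h1
  have : ⁅h, g⁆ = 1 := congrArg Subtype.val (DFunLike.congr_fun h1 h)
  exact commutatorElement_eq_one_iff_mul_comm.mp this

theorem card_center_mul_orderOf_sq : Nat.card (center G) * orderOf ⁅x, y⁆ ^ 2 = Nat.card G := by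
  have hN := zpowers_le.mpr hc
  set φ := (commutatorRightHom hN x (commutatorElement_mem_zpowers hgen hc · x)).prod
    (commutatorRightHom hN y (commutatorElement_mem_zpowers hgen hc · y))
  have hker : φ.ker = center G := by
    ext g
    rw [MonoidHom.ker_prod, mem_inf, mem_center_iff_of_closure_pair_eq_top hgen]
    simp [commutatorRightHom, commutatorElement_eq_one_iff_commute, Commute.symm_iff (a := g)]
  have hrange : φ.range = ⊤ := by
    rw [MonoidHom.range_eq_top]
    rintro ⟨⟨_, ha⟩, ⟨_, hb⟩⟩
    obtain ⟨i, rfl⟩ := mem_zpowers_iff.mp ha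
    obtain ⟨j, rfl⟩ := mem_zpowers_iff.mp hb
    refine ⟨y ^ (-i) * x ^ j, ?_⟩
    have hφx : φ x = (1, ⟨⁅x, y⁆, mem_zpowers _⟩) := by ext <;> simp [φ, commutatorRightHom]
    have hφy : φ y = (⟨⁅x, y⁆⁻¹, inv_mem (mem_zpowers _)⟩, 1) := by
      ext <;> simp [φ, commutatorRightHom]
    rw [map_mul, map_zpow, map_zpow, hφx, hφy]
    ext
    · simp only [commutatorElement_inv, zpow_neg, Prod.pow_mk, one_zpow, Prod.inv_mk, inv_one,
        Prod.mk_mul_mk, mul_one, one_mul, InvMemClass.coe_inv, SubgroupClass.coe_zpow]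
      rw [← commutatorElement_inv, inv_zpow, inv_inv]
    · simp
  rw [← hker, ← card_mul_index φ.ker, index_ker, hrange, card_top, Nat.card_prod,
    Nat.card_zpowers, sq]

end TwoGenerated

theorem card_conjClasses_eq_of_card_carrier_eq [Finite G] {k : ℕ}
    (hk : ∀ g ∉ center G, Nat.card (ConjClasses.mk g).carrier = k) :
    Nat.card (ConjClasses G) = Nat.card (center G) + (Nat.card G - Nat.card (center G)) / k := by
  have hk' : ∀ c ∈ ConjClasses.noncenter G, Nat.card c.carrier = k := by
    rintro ⟨g⟩ hc
    exact hk g fun hg ↦ (ConjClasses.mk_bijOn G).mapsTo hg hc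
  have hfin : (ConjClasses.noncenter G).Finite := Set.toFinite _
  have hclass : Nat.card (center G) + k * (ConjClasses.noncenter G).ncard = Nat.card G := by
    rw [← Group.nat_card_center_add_sum_card_noncenter_eq_card G,
      finsum_mem_eq_finite_toFinset_sum _ hfin,
      Finset.sum_congr rfl fun c hc ↦ hk' c (hfin.mem_toFinset.mp hc), Finset.sum_const,
      smul_eq_mul, mul_comm, Set.ncard_eq_toFinset_card _ hfin]
  have hcompl : (ConjClasses.noncenter G)ᶜ.ncard = Nat.card (center G) := by
    rw [← Nat.card_coe_set_eq]
    exact (Nat.card_congr (ConjClasses.mk_bijOn G).equiv).symm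
  rw [← Set.ncard_add_ncard_compl (ConjClasses.noncenter G), hcompl, ← hclass,
    Nat.add_sub_cancel_left, add_comm]
  rcases (ConjClasses.noncenter G).eq_empty_or_nonempty with h | ⟨c, hc⟩
  · simp [h]
  · have hpos : 0 < k := by
      rw [← hk' c hc, Nat.card_coe_set_eq]
      exact one_pos.trans (Set.one_lt_ncard_iff_nontrivial.mpr hc)
    rw [Nat.mul_div_cancel_left _ hpos]

section ConjEqPowOneAdd

variable {x y : G} {k : ℕ} (hrel : y * x * y⁻¹ = x ^ (1 + k))
include hrel

theorem commutatorElement_eq_pow_of_conj_eq_pow_one_add : ⁅y, x⁆ = x ^ k := by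
  rw [commutatorElement_def, hrel, add_comm, pow_succ, mul_inv_cancel_right]

theorem commute_pow_of_conj_eq_pow_one_add (hk : orderOf x ∣ k * k) : Commute y (x ^ k) := by
  have hconj : y * x ^ k * y⁻¹ = x ^ k := by
    rw [← conj_pow, hrel, ← pow_mul, add_mul, one_mul, pow_add, orderOf_dvd_iff_pow_eq_one.mp hk,
      mul_one]
  exact mul_inv_eq_iff_eq_mul.mp hconj

end ConjEqPowOneAdd

end

theorem card_conjClasses_of_metacyclic_minimal_nonabelian_general
    (p m n : ℕ) (hp : p.Prime)
    (hm : 2 ≤ m) (hn : 1 ≤ n)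
    (D : Type) [Group D] [Fintype D] (x y : D)
    (hgen : Subgroup.closure ({x, y} : Set D) = ⊤)
    (hx : orderOf x = p ^ m)
    (hrel : y * x * y⁻¹ = x ^ (1 + p ^ (m - 1)))
    (hcard : Fintype.card D = p ^ (m + n)) :
    Nat.card (ConjClasses D) = p ^ (n + m - 1) + p ^ (n + m - 2) - p ^ (n + m - 3) := by
  have hgen' : closure {y, x} = ⊤ := by rwa [Set.pair_comm]
  have hyx : ⁅y, x⁆ = x ^ p ^ (m - 1) := commutatorElement_eq_pow_of_conj_eq_pow_one_add hrel
  have hsq : orderOf x ∣ p ^ (m - 1) * p ^ (m - 1) := by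
    rw [hx, ← pow_add]
    exact pow_dvd_pow p (by omega)
  have hcentral : ⁅y, x⁆ ∈ center D := by
    rw [hyx, mem_center_iff_of_closure_pair_eq_top hgen]
    exact ⟨Commute.self_pow x _, commute_pow_of_conj_eq_pow_one_add hrel hsq⟩
  have horder : orderOf ⁅y, x⁆ = p := by
    rw [hyx, orderOf_pow_of_dvd (pow_pos hp.pos _).ne' (hx ▸ pow_dvd_pow p (m.sub_le 1)), hx,
      Nat.pow_div (m.sub_le 1) hp.pos, Nat.sub_sub_self (by omega), pow_one]
  have hclass : ∀ g ∉ center D, Nat.card (ConjClasses.mk g).carrier = p := fun g hg ↦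
    horder ▸ card_carrier_conjClasses_mk_of_notMem_center hgen' hcentral (horder ▸ hp) hg
  obtain ⟨k, hk⟩ : ∃ k, m + n = k + 3 := ⟨m + n - 3, by omega⟩
  have hZ : Nat.card (center D) = p ^ (k + 1) := by
    have := card_center_mul_orderOf_sq hgen' hcentral
    rw [horder, Nat.card_eq_fintype_card (α := D), hcard, hk, pow_add p (k + 1) 2] at this
    exact Nat.eq_of_mul_eq_mul_right (pow_pos hp.pos 2) this
  have hnoncentral : p ^ (k + 3) - p ^ (k + 1) = p * (p ^ (k + 2) - p ^ k) := by
    rw [Nat.mul_sub, ← pow_succ', ← pow_succ']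
  rw [card_conjClasses_eq_of_card_carrier_eq hclass, hZ, Nat.card_eq_fintype_card (α := D), hcard,
    hk, hnoncentral, Nat.mul_div_cancel_left _ hp.pos, show n + m - 1 = k + 2 by omega,
    show n + m - 2 = k + 1 by omega, show n + m - 3 = k by omega]
  have := Nat.pow_le_pow_right hp.pos (show k ≤ k + 2 by omega)
  omega

/-- The metacyclic minimal non-abelian group
`D = ⟨x,y | x^(p^m) = y^(p^n) = 1, yxy⁻¹ = x^(1+p^(m-1))⟩` has exactly
`p^(n+m-1) + p^(n+m-2) - p^(n+m-3)` conjugacy classes. -/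
theorem card_conjClasses_of_metacyclic_minimal_nonabelian
    (p m n : ℕ) (hp : p.Prime) (hodd : Odd p)
    (hm : 2 ≤ m) (hn : 1 ≤ n)
    (D : Type) [Group D] [Fintype D] (x y : D)
    (hgen : Subgroup.closure ({x, y} : Set D) = ⊤)
    (hx : orderOf x = p ^ m) (hy : orderOf y = p ^ n)
    (hrel : y * x * y⁻¹ = x ^ (1 + p ^ (m - 1)))
    (hcard : Fintype.card D = p ^ (m + n)) :
    Nat.card (ConjClasses D) = p ^ (n + m - 1) + p ^ (n + m - 2) - p ^ (n + m - 3) :=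
  card_conjClasses_of_metacyclic_minimal_nonabelian_general p m n hp hm hn D x y hgen hx hrel hcard
end

section
/- Let p be an odd prime and D = ⟨x, y | x^(p^m) = y^(p^n) = 1, y x y⁻¹ = x^(1+p^(m-1))⟩ with m ≥ 2, n ≥ 1. Then D is minimal non-abelian: D is non-abelian but every proper subgroup of D is abelian. -/
/-!
Put `t = p^(m-1)`. Since `x^(t*t) = 1`, the element `x^t` commutes with `y`, so every element has
the form `x^i y^j` and `(x^i y^j)(x^k y^l) = x^(i+k+tkj) y^(j+l)`. Hence `x^i y^j` and `x^k y^l`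
commute iff `p ∣ kj - il`; in particular `y` and `x` do not. If a subgroup contains two such
elements with `p ∤ kj - il`, then `(x^i y^j)^l (x^k y^l)^(-j) = x^u` with `u ≡ il - kj ≢ 0 (mod p)`
lies in it, hence so does `x`, and then `y^j` and `y^l`, one of whose exponents is prime to `p`.
-/

lemma Subgroup.mem_of_zpow_mem_of_not_dvd {G : Type*} [Group G] {H : Subgroup G} {g : G}
    {p s : ℕ} (hp : p.Prime) (hg : orderOf g = p ^ s) {u : ℤ} (hu : ¬ (p : ℤ) ∣ u)
    (h : g ^ u ∈ H) : g ∈ H := by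
  obtain ⟨a, b, hab⟩ : IsCoprime u ((p : ℤ) ^ s) :=
    ((Prime.coprime_iff_not_dvd (Nat.prime_iff_prime_int.mp hp)).2 hu).symm.pow_right
  have hgp : g ^ ((p : ℤ) ^ s) = 1 := orderOf_dvd_iff_zpow_eq_one.1 (by rw [hg]; push_cast; rfl)
  have hgu : g = (g ^ u) ^ a := by
    rw [← zpow_mul, show u * a = 1 - (p : ℤ) ^ s * b by linarith, zpow_sub, zpow_mul, hgp,
      one_zpow, zpow_one, inv_one, mul_one]
  exact hgu ▸ H.zpow_mem h a

namespace Metacyclic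

variable {G : Type*} [Group G] {x y : G} {t : ℤ}

lemma commute_zpow_of_semiconjBy (hyx : SemiconjBy y x (x * x ^ t)) (htt : x ^ (t * t) = 1) :
    Commute y (x ^ t) := by
  have h := hyx.zpow_right t
  rwa [(Commute.self_zpow x t).mul_zpow, ← zpow_mul, htt, mul_one] at h

lemma semiconjBy_zpow_left (hyx : SemiconjBy y x (x * x ^ t)) (hyt : Commute y (x ^ t)) (j : ℤ) :
    SemiconjBy (y ^ j) x (x * x ^ (t * j)) := by
  induction j using Int.induction_on with
  | zero => simp
  | succ j ih =>
    rw [zpow_add_one, mul_add_one, zpow_add, ← mul_assoc]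
    exact (ih.mul_right (hyt.zpow_left j)).mul_left hyx
  | pred j ih =>
    have hyx' : SemiconjBy y⁻¹ x (x * (x ^ t)⁻¹) := by
      simpa using (hyx.mul_right hyt.inv_right).inv_symm_left
    rw [zpow_sub_one, mul_sub_one, zpow_sub, ← mul_assoc]
    exact (ih.mul_right (hyt.zpow_left _).inv_right).mul_left hyx'

lemma zpow_mul_zpow_swap (hyx : SemiconjBy y x (x * x ^ t)) (hyt : Commute y (x ^ t)) (j k : ℤ) :
    y ^ j * x ^ k = x ^ (k + t * k * j) * y ^ j := by
  rw [((semiconjBy_zpow_left hyx hyt j).zpow_right k).eq, ← zpow_one_add, ← zpow_mul]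
  congr 2
  ring

lemma zpow_mul_zpow_mul (hyx : SemiconjBy y x (x * x ^ t)) (hyt : Commute y (x ^ t))
    (i j k l : ℤ) : x ^ i * y ^ j * (x ^ k * y ^ l) = x ^ (i + k + t * k * j) * y ^ (j + l) := by
  rw [mul_assoc, ← mul_assoc (y ^ j), zpow_mul_zpow_swap hyx hyt, zpow_add y, add_assoc, zpow_add x]
  group

lemma zpow_mul_zpow_inv (hyx : SemiconjBy y x (x * x ^ t)) (hyt : Commute y (x ^ t)) (i j : ℤ) :
    (x ^ i * y ^ j)⁻¹ = x ^ (-i + t * i * j) * y ^ (-j) := by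
  rw [mul_inv_rev, ← zpow_neg, ← zpow_neg, zpow_mul_zpow_swap hyx hyt]
  congr 3
  ring

lemma exists_zpow_mul_zpow_zpow (hyx : SemiconjBy y x (x * x ^ t)) (hyt : Commute y (x ^ t))
    (i j r : ℤ) : ∃ e : ℤ, (x ^ i * y ^ j) ^ r = x ^ (i * r + t * e) * y ^ (j * r) := by
  induction r using Int.induction_on with
  | zero => exact ⟨0, by simp⟩
  | succ r ih =>
    obtain ⟨e, he⟩ := ih
    refine ⟨e + i * j * r, ?_⟩
    rw [zpow_add_one, he, zpow_mul_zpow_mul hyx hyt]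
    congr 2 <;> ring
  | pred r ih =>
    obtain ⟨e, he⟩ := ih
    refine ⟨e + i * j + (-i + t * i * j) * (-j * r), ?_⟩
    rw [zpow_sub_one, he, zpow_mul_zpow_inv hyx hyt, zpow_mul_zpow_mul hyx hyt]
    congr 2 <;> ring

lemma not_commute_of_zpow_ne_one (hyx : SemiconjBy y x (x * x ^ t)) (ht : x ^ t ≠ 1) :
    ¬ Commute y x := fun h ↦ ht <| by simpa using hyx.eq.symm.trans h.eq

lemma commute_zpow_mul_zpow_iff (hyx : SemiconjBy y x (x * x ^ t)) (hyt : Commute y (x ^ t))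
    (i j k l : ℤ) : Commute (x ^ i * y ^ j) (x ^ k * y ^ l) ↔ x ^ (t * (k * j - i * l)) = 1 := by
  rw [Commute, SemiconjBy, zpow_mul_zpow_mul hyx hyt, zpow_mul_zpow_mul hyx hyt, add_comm l,
    mul_left_inj, show i + k + t * k * j = k + i + t * i * l + t * (k * j - i * l) by ring,
    zpow_add, mul_eq_left]

lemma exists_eq_zpow_mul_zpow (hyx : SemiconjBy y x (x * x ^ t)) (hyt : Commute y (x ^ t))
    (hgen : Subgroup.closure {x, y} = ⊤) (g : G) : ∃ i j : ℤ, g = x ^ i * y ^ j := by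
  induction hgen ▸ Subgroup.mem_top g using Subgroup.closure_induction with
  | mem g hg =>
    rcases hg with rfl | rfl
    exacts [⟨1, 0, by simp⟩, ⟨0, 1, by simp⟩]
  | one => exact ⟨0, 0, by simp⟩
  | mul _ _ _ _ ha hb =>
    obtain ⟨i, j, rfl⟩ := ha
    obtain ⟨k, l, rfl⟩ := hb
    exact ⟨_, _, zpow_mul_zpow_mul hyx hyt i j k l⟩
  | inv _ _ ha =>
    obtain ⟨i, j, rfl⟩ := ha
    exact ⟨_, _, zpow_mul_zpow_inv hyx hyt i j⟩

lemma exists_zpow_mem (hyx : SemiconjBy y x (x * x ^ t)) (hyt : Commute y (x ^ t))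
    {H : Subgroup G} {i j k l : ℤ} (ha : x ^ i * y ^ j ∈ H) (hb : x ^ k * y ^ l ∈ H) :
    ∃ e : ℤ, x ^ (i * l - k * j + t * e) ∈ H := by
  obtain ⟨e₁, he₁⟩ := exists_zpow_mul_zpow_zpow hyx hyt i j l
  obtain ⟨e₂, he₂⟩ := exists_zpow_mul_zpow_zpow hyx hyt k l (-j)
  have h := H.mul_mem (H.zpow_mem ha l) (H.zpow_mem hb (-j))
  rw [he₁, he₂, zpow_mul_zpow_mul hyx hyt, show j * l + l * -j = 0 by ring, zpow_zero,
    mul_one] at h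
  refine ⟨e₁ + e₂ + (-(k * j) + t * e₂) * (j * l), ?_⟩
  convert h using 2
  ring

theorem commute_of_mem_of_ne_top {p m n : ℕ} (hp : p.Prime) (hx : orderOf x = p ^ m)
    (hy : orderOf y = p ^ n) (hpt : (p : ℤ) ∣ t) (htp : x ^ (t * p) = 1)
    (hyx : SemiconjBy y x (x * x ^ t)) (hyt : Commute y (x ^ t))
    (hgen : Subgroup.closure {x, y} = ⊤) {H : Subgroup G} (hH : H ≠ ⊤) {a b : G} (ha : a ∈ H)
    (hb : b ∈ H) : Commute a b := by
  by_contra hab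
  apply hH
  obtain ⟨i, j, rfl⟩ := exists_eq_zpow_mul_zpow hyx hyt hgen a
  obtain ⟨k, l, rfl⟩ := exists_eq_zpow_mul_zpow hyx hyt hgen b
  have hd : ¬ (p : ℤ) ∣ k * j - i * l := fun ⟨s, hs⟩ ↦ hab <|
    (commute_zpow_mul_zpow_iff hyx hyt i j k l).2 (by rw [hs, ← mul_assoc, zpow_mul, htp, one_zpow])
  have hxH : x ∈ H := by
    obtain ⟨e, he⟩ := exists_zpow_mem hyx hyt ha hb
    refine H.mem_of_zpow_mem_of_not_dvd hp hx (fun hdvd ↦ hd ?_) he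
    exact dvd_sub_comm.1 ((dvd_add_left (hpt.mul_right e)).1 hdvd)
  have hyH {i j : ℤ} (h : x ^ i * y ^ j ∈ H) (hj : ¬ (p : ℤ) ∣ j) : y ∈ H :=
    H.mem_of_zpow_mem_of_not_dvd hp hy hj <| by
      simpa using H.mul_mem (H.inv_mem (H.zpow_mem hxH i)) h
  have hyH : y ∈ H := by
    by_cases hj : (p : ℤ) ∣ j
    · exact hyH hb fun hl ↦ hd (dvd_sub (hj.mul_left k) (hl.mul_left i))
    · exact hyH ha hj
  rw [eq_top_iff, ← hgen, Subgroup.closure_le]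
  rintro g (rfl | rfl) <;> assumption

end Metacyclic

theorem metacyclic_minimal_nonabelian_general
    (p m n : ℕ) (hp : p.Prime)
    (hm : 2 ≤ m)
    (D : Type) [Group D] (x y : D)
    (hgen : Subgroup.closure ({x, y} : Set D) = ⊤)
    (hx : orderOf x = p ^ m) (hy : orderOf y = p ^ n)
    (hrel : y * x * y⁻¹ = x ^ (1 + p ^ (m - 1))) :
    (¬ ∀ a b : D, Commute a b) ∧
    (∀ H : Subgroup D, H ≠ ⊤ → ∀ a ∈ H, ∀ b ∈ H, Commute a b) := by
  set t : ℤ := (p : ℤ) ^ (m - 1) with ht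
  have hxt : x ^ t = 1 ↔ p ^ m ∣ p ^ (m - 1) := by
    rw [ht, ← Nat.cast_pow, zpow_natCast, ← hx, orderOf_dvd_iff_pow_eq_one]
  have hxpow {e : ℤ} (h : (p : ℤ) ^ m ∣ e) : x ^ e = 1 :=
    orderOf_dvd_iff_zpow_eq_one.1 (by rw [hx]; exact_mod_cast h)
  have hyx : SemiconjBy y x (x * x ^ t) := by
    rw [SemiconjBy, ← mul_inv_eq_iff_eq_mul, hrel, pow_add, pow_one, ht, ← Nat.cast_pow,
      zpow_natCast]
  have hyt : Commute y (x ^ t) := Metacyclic.commute_zpow_of_semiconjBy hyx <| hxpow <| by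
    rw [ht, ← pow_add]; exact pow_dvd_pow _ (by omega)
  have htp : x ^ (t * p) = 1 := hxpow <| by rw [ht, ← pow_succ, Nat.sub_add_cancel (by omega)]
  have hpt : (p : ℤ) ∣ t := dvd_pow_self _ (by omega)
  refine ⟨fun h ↦ Metacyclic.not_commute_of_zpow_ne_one hyx ?_ (h y x),
    fun H hH a ha b hb ↦ Metacyclic.commute_of_mem_of_ne_top hp hx hy hpt htp hyx hyt hgen hH ha hb⟩
  rw [Ne, hxt, Nat.pow_dvd_pow_iff_le_right hp.one_lt]
  omega

/-- The metacyclic group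
`D = ⟨x,y | x^(p^m) = y^(p^n) = 1, yxy⁻¹ = x^(1+p^(m-1))⟩` is minimal non-abelian:
it is non-abelian, but every proper subgroup is abelian. -/
theorem metacyclic_minimal_nonabelian
    (p m n : ℕ) (hp : p.Prime) (hodd : Odd p)
    (hm : 2 ≤ m) (hn : 1 ≤ n)
    (D : Type) [Group D] [Fintype D] (x y : D)
    (hgen : Subgroup.closure ({x, y} : Set D) = ⊤)
    (hx : orderOf x = p ^ m) (hy : orderOf y = p ^ n)
    (hrel : y * x * y⁻¹ = x ^ (1 + p ^ (m - 1)))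
    (hcard : Fintype.card D = p ^ (m + n)) :
    (¬ ∀ a b : D, Commute a b) ∧
    (∀ H : Subgroup D, H ≠ ⊤ → ∀ a ∈ H, ∀ b ∈ H, Commute a b) :=
  metacyclic_minimal_nonabelian_general p m n hp hm D x y hgen hx hy hrel
end

section
/- Let p be an odd prime and D = ⟨x, y | x^(p^m) = y^(p^n) = 1, y x y⁻¹ = x^(1+p^(m-1))⟩ with m ≥ 2, n ≥ 1. Then the normalizer of ⟨y⟩ in D equals the centralizer of y in D. -/
/-!
The cyclic subgroup `⟨x⟩` is normal and `D/⟨x⟩` is cyclic of order `p^n`, generated by the image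
of `y`. Hence every commutator `⁅g, y⁆` lies in `⟨x⟩`, while `⟨x⟩ ∩ ⟨y⟩ = 1` because `y` and its
image in the quotient have the same order. If `g` normalizes `⟨y⟩`, then `⁅g, y⁆` lies in `⟨y⟩`
as well, so it is trivial and `g` centralizes `y`.
-/

open Subgroup QuotientGroup
open scoped commutatorElement

section

variable {G : Type*} [Group G]

theorem Subgroup.normal_zpowers_of_closure_pair [Finite G] {x y : G}
    (hgen : closure ({x, y} : Set G) = ⊤) (hconj : y * x * y⁻¹ ∈ zpowers x) :
    (zpowers x).Normal := by
  have hy : y ∈ normalizer (zpowers x : Set G) := by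
    refine mem_normalizer_fintype fun g hg => ?_
    obtain ⟨k, rfl⟩ := mem_zpowers_iff.mp hg
    rw [← conj_zpow]
    exact zpow_mem hconj k
  rw [← normalizer_eq_top_iff, eq_top_iff, ← hgen, closure_le]
  rintro z (rfl | rfl)
  · exact le_normalizer (mem_zpowers z)
  · exact hy

theorem QuotientGroup.zpowers_mk_eq_top_of_closure_pair {N : Subgroup G} [N.Normal] {x y : G}
    (hgen : closure ({x, y} : Set G) = ⊤) (hx : x ∈ N) :
    zpowers (y : G ⧸ N) = ⊤ := by
  rw [eq_top_iff, ← map_top_of_surjective _ (mk'_surjective N), ← hgen, MonoidHom.map_closure,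
    closure_le]
  rintro _ ⟨z, rfl | rfl, rfl⟩
  · rw [mk'_apply, (eq_one_iff z).mpr hx]
    exact one_mem _
  · exact mem_zpowers _

theorem QuotientGroup.commutatorElement_mem_of_zpowers_mk_eq_top {N : Subgroup G} [N.Normal]
    {y : G} (htop : zpowers (y : G ⧸ N) = ⊤) (g : G) : ⁅g, y⁆ ∈ N := by
  obtain ⟨k, hk⟩ := mem_zpowers_iff.mp (htop ▸ mem_top (g : G ⧸ N))
  have hcomm : Commute (g : G ⧸ N) y := hk ▸ (Commute.refl _).zpow_left k
  rw [← eq_one_iff, ← mk'_apply, map_commutatorElement]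
  exact commutatorElement_eq_one_iff_commute.mpr hcomm

theorem QuotientGroup.disjoint_zpowers_of_orderOf_mk_eq {N : Subgroup G} [N.Normal] {y : G}
    (hord : orderOf (y : G ⧸ N) = orderOf y) : Disjoint N (zpowers y) := by
  rw [disjoint_def]
  rintro _ hN ⟨k, rfl⟩
  have hk : (y : G ⧸ N) ^ k = 1 := (eq_one_iff _).mpr hN
  rw [← orderOf_dvd_iff_zpow_eq_one, hord] at hk
  exact orderOf_dvd_iff_zpow_eq_one.mp hk

theorem Subgroup.normalizer_zpowers_eq_centralizer_of_disjoint {N : Subgroup G} {y : G}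
    (hcomm : ∀ g : G, ⁅g, y⁆ ∈ N) (hdisj : Disjoint N (zpowers y)) :
    normalizer (zpowers y : Set G) = centralizer {y} := by
  refine le_antisymm (fun g hg => ?_) ?_
  · have hconj : g * y * g⁻¹ ∈ zpowers y := (mem_normalizer_iff.mp hg y).mp (mem_zpowers y)
    have hone : ⁅g, y⁆ = 1 :=
      disjoint_def.mp hdisj (hcomm g) (mul_mem hconj (inv_mem (mem_zpowers y)))
    exact mem_centralizer_singleton_iff.mpr (commutatorElement_eq_one_iff_commute.mp hone).eq
  · rw [← centralizer_closure, ← zpowers_eq_closure]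
    exact centralizer_le_normalizer _

end

theorem normalizer_zpowers_y_eq_centralizer_general
    (p m n : ℕ)
    (D : Type) [Group D] [Fintype D] (x y : D)
    (hgen : Subgroup.closure ({x, y} : Set D) = ⊤)
    (hx : orderOf x = p ^ m) (hy : orderOf y = p ^ n)
    (hrel : y * x * y⁻¹ = x ^ (1 + p ^ (m - 1)))
    (hcard : Fintype.card D = p ^ (m + n)) :
    Subgroup.normalizer ((Subgroup.zpowers y : Subgroup D) : Set D) = Subgroup.centralizer {y} := by
  have := normal_zpowers_of_closure_pair hgen (hrel ▸ pow_mem (mem_zpowers x) _)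
  have htop := zpowers_mk_eq_top_of_closure_pair hgen (mem_zpowers x)
  have hindex : (zpowers x).index = p ^ n := by
    have h := card_mul_index (zpowers x)
    rw [Nat.card_zpowers, hx, Nat.card_eq_fintype_card, hcard, pow_add] at h
    exact Nat.eq_of_mul_eq_mul_left (hx ▸ orderOf_pos x) h
  have hord : orderOf (y : D ⧸ zpowers x) = orderOf y := by
    rw [← Nat.card_zpowers, htop, card_top, ← index, hindex, hy]
  exact normalizer_zpowers_eq_centralizer_of_disjoint
    (commutatorElement_mem_of_zpowers_mk_eq_top htop) (disjoint_zpowers_of_orderOf_mk_eq hord)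

/-- In the metacyclic minimal non-abelian group
`D = ⟨x,y | x^(p^m) = y^(p^n) = 1, yxy⁻¹ = x^(1+p^(m-1))⟩`, the normalizer
of `⟨y⟩` equals the centralizer of `y`. -/
theorem normalizer_zpowers_y_eq_centralizer
    (p m n : ℕ) (hp : p.Prime) (hodd : Odd p)
    (hm : 2 ≤ m) (hn : 1 ≤ n)
    (D : Type) [Group D] [Fintype D] (x y : D)
    (hgen : Subgroup.closure ({x, y} : Set D) = ⊤)
    (hx : orderOf x = p ^ m) (hy : orderOf y = p ^ n)
    (hrel : y * x * y⁻¹ = x ^ (1 + p ^ (m - 1)))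
    (hcard : Fintype.card D = p ^ (m + n)) :
    Subgroup.normalizer ((Subgroup.zpowers y : Subgroup D) : Set D) = Subgroup.centralizer {y} :=
  normalizer_zpowers_y_eq_centralizer_general p m n D x y hgen hx hy hrel hcard
end

section
/- Let p be an odd prime and D = ⟨x, y | x^(p^m) = y^(p^n) = 1, y x y⁻¹ = x^(1+p^(m-1))⟩ with m ≥ 2, n ≥ 1. Then the centralizer of y in D equals ⟨x^p, y⟩ and has index p in D. -/
/-!
Write `s = p^(m-1)`, so that `y x y⁻¹ = x^(1+s)` and `x^s ≠ 1`. Then `x` does not commute with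
`y`, while `x^p` does, because `x^(p s) = x^(p^m) = 1`; hence `H = ⟨x^p, y⟩ ≤ C(y) < D`.
Conjugating `y` by `x^{±1}` multiplies it by `x^{∓s} ∈ H`, so `H` is normal, and `D/H` is
generated by the image of `x`, whose `p`-th power is trivial. Thus `[D : H]` divides `p`, which
squeezes `H ≤ C(y) < D` into `H = C(y)` of index `p`.
-/

namespace Subgroup

variable {G : Type*} [Group G]

theorem mem_normalizer_closure_of_conj_mem {T : Set G} {g : G}
    (hconj : ∀ t ∈ T, g * t * g⁻¹ ∈ closure T)
    (hconj_inv : ∀ t ∈ T, g⁻¹ * t * g ∈ closure T) :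
    g ∈ normalizer (closure T : Set G) := by
  rw [mem_normalizer_iff_map_conj_eq]
  apply le_antisymm
  · rw [MonoidHom.map_closure, closure_le]
    rintro _ ⟨t, ht, rfl⟩
    exact hconj t ht
  · rw [closure_le]
    intro t ht
    exact ⟨g⁻¹ * t * g, hconj_inv t ht, by simp [MulAut.conj_apply, mul_assoc]⟩

theorem index_dvd_of_closure_pair_eq_top {N : Subgroup G} [N.Normal] {a b : G} {k : ℕ}
    (hgen : closure {a, b} = ⊤) (ha : a ^ k ∈ N) (hb : b ∈ N) : N.index ∣ k := by
  have hcyclic : ∀ q : G ⧸ N, q ∈ zpowers (a : G ⧸ N) := by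
    have : closure {a, b} ≤ (zpowers (a : G ⧸ N)).comap (QuotientGroup.mk' N) := by
      rw [closure_le]
      rintro _ (rfl | rfl)
      · exact mem_zpowers _
      · simp [(QuotientGroup.eq_one_iff _).mpr hb]
    rintro ⟨g⟩
    exact this (hgen ▸ mem_top g)
  rw [index_eq_card, ← orderOf_eq_card_of_forall_mem_zpowers hcyclic]
  exact orderOf_dvd_of_pow_eq_one ((QuotientGroup.eq_one_iff _).mpr (by simpa using ha))

theorem eq_and_index_eq_of_le_of_index_dvd_prime {H K : Subgroup G} {p : ℕ} (hp : p.Prime)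
    (hle : H ≤ K) (hH : H.index ∣ p) (hK : K ≠ ⊤) : H = K ∧ K.index = p := by
  have hmul := relIndex_mul_index hle
  have hKp : K.index = p :=
    (hp.eq_one_or_self_of_dvd _ ((Dvd.intro_left _ hmul).trans hH)).resolve_left
      (mt index_eq_one.mp hK)
  have hHp : H.index = p := Nat.dvd_antisymm hH (hKp ▸ Dvd.intro_left _ hmul)
  rw [hKp, hHp] at hmul
  have hrelIndex : H.relIndex K = 1 :=
    Nat.eq_of_mul_eq_mul_right hp.pos (by rw [hmul, one_mul])
  exact ⟨le_antisymm hle (relIndex_eq_one.mp hrelIndex), hKp⟩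

end Subgroup

section ConjEqPow

variable {G : Type*} [Group G] {x y : G} {s : ℕ}

theorem commute_pow_of_conj_eq_pow (hrel : y * x * y⁻¹ = x ^ (1 + s)) {k : ℕ}
    (hk : orderOf x ∣ s * k) : Commute y (x ^ k) := by
  have : y * x ^ k * y⁻¹ = x ^ k := by
    rw [← conj_pow, hrel, ← pow_mul, add_mul, one_mul, pow_add,
      orderOf_dvd_iff_pow_eq_one.mp hk, mul_one]
  exact mul_inv_eq_iff_eq_mul.mp this

theorem commute_iff_pow_eq_one_of_conj_eq_pow (hrel : y * x * y⁻¹ = x ^ (1 + s)) :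
    Commute y x ↔ x ^ s = 1 := by
  rw [Commute, SemiconjBy, ← mul_inv_eq_iff_eq_mul, hrel, pow_add, pow_one, mul_eq_left]

theorem inv_mul_mul_eq_of_conj_eq_pow (hrel : y * x * y⁻¹ = x ^ (1 + s)) :
    x⁻¹ * y * x = x ^ s * y := by
  rw [mul_assoc, mul_inv_eq_iff_eq_mul.mp hrel, pow_add, pow_one]
  group

theorem mul_mul_inv_eq_of_conj_eq_pow (hrel : y * x * y⁻¹ = x ^ (1 + s)) :
    x * y * x⁻¹ = (x ^ s)⁻¹ * y := by
  have h := inv_mul_mul_eq_of_conj_eq_pow hrel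
  calc x * y * x⁻¹ = (x ^ s)⁻¹ * x * (x ^ s * y) * x⁻¹ := by group
    _ = (x ^ s)⁻¹ * y := by rw [← h]; group

theorem normal_closure_pow_pair_of_conj_eq_pow (hgen : Subgroup.closure {x, y} = ⊤)
    (hrel : y * x * y⁻¹ = x ^ (1 + s)) {k : ℕ} (hs : x ^ s ∈ Subgroup.closure {x ^ k, y}) :
    (Subgroup.closure {x ^ k, y}).Normal := by
  have hxk : x ^ k ∈ Subgroup.closure {x ^ k, y} := Subgroup.subset_closure (by simp)
  have hy : y ∈ Subgroup.closure {x ^ k, y} := Subgroup.subset_closure (by simp)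
  have hx_mem : x ∈ Subgroup.normalizer (Subgroup.closure {x ^ k, y} : Set G) := by
    apply Subgroup.mem_normalizer_closure_of_conj_mem <;>
      simp only [Set.mem_insert_iff, Set.mem_singleton_iff, forall_eq_or_imp, forall_eq]
    · rw [mul_mul_inv_eq_of_conj_eq_pow hrel, show x * x ^ k * x⁻¹ = x ^ k by group]
      exact ⟨hxk, mul_mem (inv_mem hs) hy⟩
    · rw [inv_mul_mul_eq_of_conj_eq_pow hrel, show x⁻¹ * x ^ k * x = x ^ k by group]
      exact ⟨hxk, mul_mem hs hy⟩
  rw [← Subgroup.normalizer_eq_top_iff, eq_top_iff, ← hgen, Subgroup.closure_le]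
  exact Set.pair_subset hx_mem (Subgroup.le_normalizer hy)

end ConjEqPow

theorem centralizer_y_of_metacyclic_minimal_nonabelian_general
    (p m : ℕ) (hp : p.Prime)
    (hm : 2 ≤ m)
    (D : Type) [Group D] (x y : D)
    (hgen : Subgroup.closure ({x, y} : Set D) = ⊤)
    (hx : orderOf x = p ^ m)
    (hrel : y * x * y⁻¹ = x ^ (1 + p ^ (m - 1))) :
    Subgroup.centralizer {y} = Subgroup.closure ({x ^ p, y} : Set D) ∧
    (Subgroup.centralizer ({y} : Set D)).index = p := by
  set H := Subgroup.closure ({x ^ p, y} : Set D)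
  have hxp : x ^ p ∈ H := Subgroup.subset_closure (by simp)
  have hy : y ∈ H := Subgroup.subset_closure (by simp)
  have hxs : x ^ p ^ (m - 1) ≠ 1 := pow_ne_one_of_lt_orderOf (pow_pos hp.pos _).ne'
    (hx ▸ Nat.pow_lt_pow_right hp.one_lt (by omega))
  have hle : H ≤ Subgroup.centralizer {y} := by
    refine (Subgroup.closure_le _).mpr
      (Set.pair_subset ?_ (Subgroup.mem_centralizer_singleton_iff.mpr rfl))
    refine Subgroup.mem_centralizer_singleton_iff.mpr (commute_pow_of_conj_eq_pow hrel ?_).symm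
    rw [hx, ← pow_succ, Nat.sub_add_cancel (by omega)]
  have hne : Subgroup.centralizer {y} ≠ ⊤ := fun h => hxs <|
    (commute_iff_pow_eq_one_of_conj_eq_pow hrel).mp
      (Subgroup.mem_centralizer_singleton_iff.mp (h ▸ Subgroup.mem_top x)).symm
  have hxs_mem : x ^ p ^ (m - 1) ∈ H := by
    rw [show p ^ (m - 1) = p * p ^ (m - 2) by rw [← pow_succ']; congr 1; omega, pow_mul]
    exact pow_mem hxp _
  have hH_normal : H.Normal := normal_closure_pow_pair_of_conj_eq_pow hgen hrel hxs_mem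
  obtain ⟨heq, hidx⟩ := Subgroup.eq_and_index_eq_of_le_of_index_dvd_prime hp hle
    (Subgroup.index_dvd_of_closure_pair_eq_top hgen hxp hy) hne
  exact ⟨heq.symm, hidx⟩

/-- In the metacyclic minimal non-abelian group
`D = ⟨x,y | x^(p^m) = y^(p^n) = 1, yxy⁻¹ = x^(1+p^(m-1))⟩`, the centralizer of `y`
equals `⟨x^p, y⟩` and has index `p` in `D`. -/
theorem centralizer_y_of_metacyclic_minimal_nonabelian
    (p m n : ℕ) (hp : p.Prime) (hodd : Odd p)
    (hm : 2 ≤ m) (hn : 1 ≤ n)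
    (D : Type) [Group D] [Fintype D] (x y : D)
    (hgen : Subgroup.closure ({x, y} : Set D) = ⊤)
    (hx : orderOf x = p ^ m) (hy : orderOf y = p ^ n)
    (hrel : y * x * y⁻¹ = x ^ (1 + p ^ (m - 1)))
    (hcard : Fintype.card D = p ^ (m + n)) :
    Subgroup.centralizer {y} = Subgroup.closure ({x ^ p, y} : Set D) ∧
    (Subgroup.centralizer ({y} : Set D)).index = p :=
  centralizer_y_of_metacyclic_minimal_nonabelian_general p m hp hm D x y hgen hx hrel
end

section
/- Let p be an odd prime, m ≥ 2, n ≥ 1, and let e be a positive divisor of p - 1. Suppose real numbers k₀, k₁ satisfy: k₀ ≤ ((p^(m-1) - 1)/e + e - 1)·p^n, k₀ + k₁ ≥ ((p^(m-1) + p^(m-2) - p^(m-3) - 1)/e + e)·p^n, and k₀ + p²·k₁ ≤ ((p^m - p)/e + p·e)·p^n. Then ((p^m - 1)/e + p² + e - 1)·p^n ≤ ((p^m - 1)/e + p²)·p^n, a contradiction (i.e., no such k₀, k₁ exist). -/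
/-!
The combination `p² · h2 - (p² - 1) · h1` bounds `k₀ + p² k₁` from below by
`((p^m - 1)/e + e + p² - 1) p^n`, which exceeds the bound in `h3` by
`((p - 1)/e + (p - 1)(p + 1 - e)) p^n > 0`, because `e ≤ p - 1`.
-/

section
variable {K : Type*} [Field K] [LinearOrder K] [IsStrictOrderedRing K] {P E k₀ k₁ : K}

theorem lower_bound_le_add_sq_mul (hP : 1 ≤ P) (m n : ℤ)
    (h₁ : k₀ ≤ ((P ^ (m - 1) - 1) / E + E - 1) * P ^ n)
    (h₂ : ((P ^ (m - 1) + P ^ (m - 2) - P ^ (m - 3) - 1) / E + E) * P ^ n ≤ k₀ + k₁) :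
    ((P ^ m - 1) / E + E + P ^ 2 - 1) * P ^ n ≤ k₀ + P ^ 2 * k₁ := by
  have hP₀ : P ≠ 0 := by positivity
  have hsq : 0 ≤ P ^ 2 - 1 := by nlinarith
  simp only [zpow_sub₀ hP₀, zpow_ofNat] at h₁ h₂
  have hcomb : ((P ^ m - 1) / E + E + P ^ 2 - 1) * P ^ n
      = P ^ 2 * (((P ^ m / P + P ^ m / P ^ 2 - P ^ m / P ^ 3 - 1) / E + E) * P ^ n)
        - (P ^ 2 - 1) * (((P ^ m / P - 1) / E + E - 1) * P ^ n) := by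
    field_simp
    ring
  rw [hcomb]
  linear_combination P ^ 2 * h₂ + (P ^ 2 - 1) * h₁

theorem upper_bound_lt_lower_bound (hP : 1 < P) (hE₀ : 0 ≤ E) (hE : E < P + 1) (m n : ℤ) :
    ((P ^ m - P) / E + P * E) * P ^ n < ((P ^ m - 1) / E + E + P ^ 2 - 1) * P ^ n := by
  have hgap : 0 < (P - 1) / E + (P - 1) * (P + 1 - E) := by
    have hprod : 0 < (P - 1) * (P + 1 - E) := mul_pos (by linarith) (by linarith)
    have hdiv : 0 ≤ (P - 1) / E := div_nonneg (by linarith) hE₀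
    linarith
  have hPn : 0 < P ^ n := zpow_pos (by linarith) n
  linear_combination mul_lt_mul_of_pos_right hgap hPn
end

theorem alperin_mckay_arithmetic_contradiction_general
    (p m n e : ℕ) (hp : p.Prime)
    (hdvd : e ∣ p - 1)
    (k₀ k₁ : ℚ)
    (h1 : k₀ ≤ (((p : ℚ) ^ ((m : ℤ) - 1) - 1) / e + e - 1) * (p : ℚ) ^ (n : ℤ))
    (h2 : (((p : ℚ) ^ ((m : ℤ) - 1) + (p : ℚ) ^ ((m : ℤ) - 2) - (p : ℚ) ^ ((m : ℤ) - 3) - 1) / e + e)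
            * (p : ℚ) ^ (n : ℤ) ≤ k₀ + k₁)
    (h3 : k₀ + (p : ℚ) ^ 2 * k₁ ≤ (((p : ℚ) ^ (m : ℤ) - p) / e + p * e) * (p : ℚ) ^ (n : ℤ)) :
    False := by
  have hp₁ : (1 : ℚ) < p := by exact_mod_cast hp.one_lt
  have he : (e : ℚ) ≤ p - 1 := by
    have := Nat.le_of_dvd (Nat.sub_pos_of_lt hp.one_lt) hdvd
    rw [← Nat.cast_one, ← Nat.cast_sub hp.one_lt.le]
    exact_mod_cast this
  have hlower := lower_bound_le_add_sq_mul hp₁.le m n h1 h2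
  have hgap := upper_bound_lt_lower_bound hp₁ e.cast_nonneg (by linarith) m n
  linarith

/-- Arithmetic core of the Alperin-McKay theorem for metacyclic minimal non-abelian
defect groups: the three inequalities on `k₀` and `k₁` are incompatible. -/
theorem alperin_mckay_arithmetic_contradiction
    (p m n e : ℕ) (hp : p.Prime) (hodd : Odd p)
    (hm : 2 ≤ m) (hn : 1 ≤ n) (he : 0 < e) (hdvd : e ∣ p - 1)
    (k₀ k₁ : ℚ)
    (h1 : k₀ ≤ (((p : ℚ) ^ ((m : ℤ) - 1) - 1) / e + e - 1) * (p : ℚ) ^ (n : ℤ))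
    (h2 : (((p : ℚ) ^ ((m : ℤ) - 1) + (p : ℚ) ^ ((m : ℤ) - 2) - (p : ℚ) ^ ((m : ℤ) - 3) - 1) / e + e)
            * (p : ℚ) ^ (n : ℤ) ≤ k₀ + k₁)
    (h3 : k₀ + (p : ℚ) ^ 2 * k₁ ≤ (((p : ℚ) ^ (m : ℤ) - p) / e + p * e) * (p : ℚ) ^ (n : ℤ)) :
    False :=
  alperin_mckay_arithmetic_contradiction_general p m n e hp hdvd k₀ k₁ h1 h2 h3
end
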